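/- Let A and B be bounded self-adjoint operators (matrices) on ℂ^N and τ > 0. Then ‖e^{-i(A+B)τ} − e^{-iAτ} e^{-iBτ}‖ ≤ (τ²/2)·‖[A,B]‖ in operator norm. -/

import Mathlib

/-!
Write `X = -iA`, `Y = -iB`. The path `D s = e^{(τ-s)(X+Y)} e^{sX} e^{sY}` runs from
`e^{τ(X+Y)}` to `e^{τX} e^{τY}`, with derivative `e^{(τ-s)(X+Y)} [e^{sX}, Y] e^{sY}`. All these
exponentials are unitary, hence contractions, and the same interpolation trick applied to
`r ↦ e^{(s-r)X} Y e^{rX}` gives `‖[e^{sX}, Y]‖ ≤ s ‖[X, Y]‖`. Integrating `s ‖[X, Y]‖` over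
`[0, τ]` yields `τ²/2 · ‖[A, B]‖`.
-/

open NormedSpace Set

section Calculus
variable {E : Type*} [NormedAddCommGroup E] [NormedSpace ℝ E]

theorem norm_image_sub_le_of_norm_deriv_le_linear {f f' : ℝ → E} {K τ : ℝ} (hτ : 0 ≤ τ)
    (hf : ∀ s ∈ Icc 0 τ, HasDerivAt f (f' s) s) (bound : ∀ s ∈ Icc 0 τ, ‖f' s‖ ≤ K * s) :
    ‖f τ - f 0‖ ≤ K * τ ^ 2 / 2 := by
  have hB (s : ℝ) : HasDerivAt (fun s ↦ K * s ^ 2 / 2) (K * s) s :=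
    (((hasDerivAt_pow 2 s).const_mul K).div_const 2).congr_deriv (by ring)
  refine image_norm_le_of_norm_deriv_right_le_deriv_boundary (f := fun s ↦ f s - f 0)
    (fun s hs ↦ ((hf s hs).continuousAt.sub continuousAt_const).continuousWithinAt)
    (fun s hs ↦ ((hf s (Ico_subset_Icc_self hs)).sub_const (f 0)).hasDerivWithinAt)
    (by simp) hB (fun s hs ↦ bound s (Ico_subset_Icc_self hs)) ⟨hτ, le_rfl⟩

end Calculus

section Contraction
variable {𝔸 : Type*} [NormedRing 𝔸] [NormedAlgebra ℝ 𝔸] [CompleteSpace 𝔸]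

theorem hasDerivAt_exp_sub_smul_const (Z : 𝔸) (τ r : ℝ) :
    HasDerivAt (fun r : ℝ ↦ exp ((τ - r) • Z)) (-(exp ((τ - r) • Z) * Z)) r := by
  simpa [Function.comp_def] using
    (hasDerivAt_exp_smul_const Z (τ - r)).scomp r ((hasDerivAt_id r).const_sub τ)

theorem norm_exp_smul_mul_sub_mul_exp_smul_le {X : 𝔸} (Y : 𝔸)
    (hX : ∀ t : ℝ, 0 ≤ t → ‖exp (t • X)‖ ≤ 1) {s : ℝ} (hs : 0 ≤ s) :
    ‖exp (s • X) * Y - Y * exp (s • X)‖ ≤ s * ‖X * Y - Y * X‖ := by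
  set g : ℝ → 𝔸 := fun r ↦ exp ((s - r) • X) * Y * exp (r • X)
  have hg (r : ℝ) : HasDerivAt g (exp ((s - r) • X) * (Y * X - X * Y) * exp (r • X)) r :=
    (((hasDerivAt_exp_sub_smul_const X s r).mul_const Y).mul
      (hasDerivAt_exp_smul_const' X r)).congr_deriv (by noncomm_ring)
  have hbound : ∀ r ∈ Ico 0 s,
      ‖exp ((s - r) • X) * (Y * X - X * Y) * exp (r • X)‖ ≤ ‖X * Y - Y * X‖ := by
    rintro r ⟨hr0, hrs⟩
    calc _ ≤ ‖exp ((s - r) • X)‖ * ‖Y * X - X * Y‖ * ‖exp (r • X)‖ := norm_mul₃_le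
      _ ≤ 1 * ‖Y * X - X * Y‖ * 1 := by
        gcongr
        · exact hX _ (by linarith)
        · exact hX _ hr0
      _ = ‖X * Y - Y * X‖ := by rw [norm_sub_rev]; ring
  have hgs : g s = Y * exp (s • X) := by simp [g]
  have hg0 : g 0 = exp (s • X) * Y := by simp [g]
  calc ‖exp (s • X) * Y - Y * exp (s • X)‖ = ‖g s - g 0‖ := by rw [hgs, hg0, norm_sub_rev]
    _ ≤ ‖X * Y - Y * X‖ * (s - 0) :=
      norm_image_sub_le_of_norm_deriv_le_segment' (fun r _ ↦ (hg r).hasDerivWithinAt) hbound s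
        ⟨hs, le_rfl⟩
    _ = s * ‖X * Y - Y * X‖ := by ring

theorem norm_exp_smul_add_sub_exp_smul_mul_exp_smul_le {X Y : 𝔸}
    (hX : ∀ t : ℝ, 0 ≤ t → ‖exp (t • X)‖ ≤ 1) (hY : ∀ t : ℝ, 0 ≤ t → ‖exp (t • Y)‖ ≤ 1)
    (hXY : ∀ t : ℝ, 0 ≤ t → ‖exp (t • (X + Y))‖ ≤ 1) {τ : ℝ} (hτ : 0 ≤ τ) :
    ‖exp (τ • (X + Y)) - exp (τ • X) * exp (τ • Y)‖ ≤ τ ^ 2 / 2 * ‖X * Y - Y * X‖ := by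
  set D : ℝ → 𝔸 := fun s ↦ exp ((τ - s) • (X + Y)) * (exp (s • X) * exp (s • Y))
  set D' : ℝ → 𝔸 := fun s ↦
    exp ((τ - s) • (X + Y)) * ((exp (s • X) * Y - Y * exp (s • X)) * exp (s • Y))
  have hD (s : ℝ) : HasDerivAt D (D' s) s :=
    ((hasDerivAt_exp_sub_smul_const (X + Y) τ s).mul ((hasDerivAt_exp_smul_const' X s).mul
      (hasDerivAt_exp_smul_const' Y s))).congr_deriv
        (by simp only [D', Pi.mul_apply]; noncomm_ring)
  have hD' : ∀ s ∈ Icc 0 τ, ‖D' s‖ ≤ ‖X * Y - Y * X‖ * s := by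
    rintro s ⟨hs0, hsτ⟩
    calc ‖D' s‖ ≤ ‖exp ((τ - s) • (X + Y))‖ *
          (‖exp (s • X) * Y - Y * exp (s • X)‖ * ‖exp (s • Y)‖) :=
        (norm_mul_le _ _).trans (by gcongr; exact norm_mul_le _ _)
      _ ≤ 1 * (s * ‖X * Y - Y * X‖ * 1) := by
        gcongr
        · exact hXY _ (by linarith)
        · exact norm_exp_smul_mul_sub_mul_exp_smul_le Y hX hs0
        · exact hY s hs0
      _ = ‖X * Y - Y * X‖ * s := by ring
  have hD0 : D 0 = exp (τ • (X + Y)) := by simp [D]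
  have hDτ : D τ = exp (τ • X) * exp (τ • Y) := by simp [D]
  calc ‖exp (τ • (X + Y)) - exp (τ • X) * exp (τ • Y)‖ = ‖D τ - D 0‖ := by
        rw [hD0, hDτ, norm_sub_rev]
    _ ≤ ‖X * Y - Y * X‖ * τ ^ 2 / 2 :=
      norm_image_sub_le_of_norm_deriv_le_linear hτ (fun s _ ↦ hD s) hD'
    _ = τ ^ 2 / 2 * ‖X * Y - Y * X‖ := by ring

end Contraction

theorem CStarRing.norm_le_one_of_mem_unitary {E : Type*} [NormedRing E] [StarRing E] [CStarRing E]
    {U : E} (hU : U ∈ unitary E) : ‖U‖ ≤ 1 := by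
  rcases subsingleton_or_nontrivial E with _ | _
  · simp [Subsingleton.elim U 0]
  · exact (CStarRing.norm_of_mem_unitary hU).le

section CStarAlgebra
variable {A : Type*} [CStarAlgebra A]

theorem IsSelfAdjoint.norm_exp_smul_neg_I_smul_le_one {a : A} (ha : IsSelfAdjoint a) (t : ℝ) :
    ‖NormedSpace.exp (t • (-Complex.I) • a)‖ ≤ 1 := by
  let +nondep : NormedAlgebra ℚ A := .restrictScalars ℚ ℂ A
  have hskew : t • (-Complex.I) • a ∈ skewAdjoint A := by
    rw [← Complex.coe_smul, smul_smul]
    exact ha.smul_mem_skewAdjoint (by simp [skewAdjoint.mem_iff])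
  exact CStarRing.norm_le_one_of_mem_unitary (exp_mem_unitary_of_mem_skewAdjoint hskew)

theorem norm_exp_neg_I_mul_smul_add_sub_exp_mul_exp_le {a b : A} (ha : IsSelfAdjoint a)
    (hb : IsSelfAdjoint b) {τ : ℝ} (hτ : 0 ≤ τ) :
    ‖exp ((-Complex.I * τ) • (a + b)) - exp ((-Complex.I * τ) • a) * exp ((-Complex.I * τ) • b)‖
      ≤ τ ^ 2 / 2 * ‖a * b - b * a‖ := by
  have hsmul (x : A) : (-Complex.I * τ) • x = τ • (-Complex.I) • x := by
    rw [mul_comm, mul_smul, Complex.coe_smul]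
  have hcomm : (-Complex.I) • a * (-Complex.I) • b - (-Complex.I) • b * (-Complex.I) • a =
      -(a * b - b * a) := by
    rw [smul_mul_smul_comm, smul_mul_smul_comm, ← smul_sub, neg_mul_neg, Complex.I_mul_I,
      neg_one_smul]
  rw [hsmul, hsmul, hsmul, smul_add, ← norm_neg (a * b - b * a), ← hcomm]
  exact norm_exp_smul_add_sub_exp_smul_mul_exp_smul_le
    (fun t _ ↦ ha.norm_exp_smul_neg_I_smul_le_one t)
    (fun t _ ↦ hb.norm_exp_smul_neg_I_smul_le_one t)
    (fun t _ ↦ by simpa only [smul_add] using (ha.add hb).norm_exp_smul_neg_I_smul_le_one t) hτ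

end CStarAlgebra

/-- Trotter-type error bound
`‖e^{-i(A+B)τ} − e^{-iAτ} e^{-iBτ}‖ ≤ (τ²/2)·‖[A,B]‖` for self-adjoint operators. -/
theorem stmt_3 {N : ℕ} (A B : EuclideanSpace ℂ (Fin N) →L[ℂ] EuclideanSpace ℂ (Fin N))
    (hA : IsSelfAdjoint A) (hB : IsSelfAdjoint B) (τ : ℝ) (hτ : 0 < τ) :
    ‖exp ((-Complex.I * (τ : ℂ)) • (A + B))
        - exp ((-Complex.I * (τ : ℂ)) • A) * exp ((-Complex.I * (τ : ℂ)) • B)‖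
      ≤ τ ^ 2 / 2 * ‖A * B - B * A‖ :=
  norm_exp_neg_I_mul_smul_add_sub_exp_mul_exp_le hA hB hτ.le
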